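/- Let V : ℝⁿ → ℝ be C² and suppose there is C > 0 with 3‖Hess V(q)‖/(1+|∇V(q)|²) ≤ C for all q. Let f(q,θ) = −⟨θ, ∇V(q)⟩/(1+|∇V(q)|²) and Θ = Λ + κ·df the perturbed Liouville form with 0 < κ ≤ 1/(2C), where Λ is the Liouville form on T*ℝⁿ. Then for every (q,θ) ∈ T*ℝⁿ, Θ(X_H)(q,θ) ≥ (1/2)|θ|² + κ·|∇V(q)|²/(1+|∇V(q)|²). -/

import Mathlib

/-!
Write `b = 1 + |∇V|²`. Along `X_H = (θ, -∇V)` the quotient rule gives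
`X_H(f) = (|∇V|² - ⟪θ, Hess V θ⟫) / b + 2 ⟪θ, ∇V⟫ ⟪∇V, Hess V θ⟫ / b²`.
By Cauchy–Schwarz the two Hessian numerators are bounded in absolute value by `‖Hess V‖ |θ|²` and
`‖Hess V‖ |θ|² b` (as `|∇V|² ≤ b`), so `X_H(f) ≥ (|∇V|² - 3 ‖Hess V‖ |θ|²) / b ≥ |∇V|² / b - C |θ|²`,
and `κ C ≤ 1/2` absorbs the error in `|θ|²`.
-/

open scoped RealInnerProductSpace

section
variable {E F : Type*} [NormedAddCommGroup E] [NormedSpace ℝ E]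
  [NormedAddCommGroup F] [InnerProductSpace ℝ F]

theorem hasLineDerivAt_neg_inner_div_one_add_norm_sq {g : E → F} {q : E}
    (hg : DifferentiableAt ℝ g q) (θ : F) (v : E) (w : F) :
    HasLineDerivAt ℝ (fun p : E × F => -⟪p.2, g p.1⟫ / (1 + ‖g p.1‖ ^ 2))
      ((-⟪w, g q⟫ - ⟪θ, fderiv ℝ g q v⟫) / (1 + ‖g q‖ ^ 2) +
        2 * ⟪θ, g q⟫ * ⟪g q, fderiv ℝ g q v⟫ / (1 + ‖g q‖ ^ 2) ^ 2) (q, θ) (v, w) := by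
  have hgv : HasDerivAt (fun t : ℝ => g (q + t • v)) (fderiv ℝ g q v) 0 :=
    hg.hasFDerivAt.hasLineDerivAt v
  have hθw : HasDerivAt (fun t : ℝ => θ + t • w) w 0 := by
    simpa using ((hasDerivAt_id (0:ℝ)).smul_const w).const_add θ
  have hb : 1 + ‖g q‖ ^ 2 ≠ 0 := by positivity
  refine ((hθw.inner ℝ hgv).fun_neg.fun_div (hgv.norm_sq.const_add 1)
    (by simpa using hb)).congr_deriv ?_
  simp only [zero_smul, add_zero]
  rw [real_inner_comm (fderiv ℝ g q v) (g q)]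
  field_simp
  ring

theorem fderiv_neg_inner_div_one_add_norm_sq_apply {g : E → F} {q : E}
    (hg : DifferentiableAt ℝ g q) (θ : F) (v : E) (w : F) :
    fderiv ℝ (fun p : E × F => -⟪p.2, g p.1⟫ / (1 + ‖g p.1‖ ^ 2)) (q, θ) (v, w) =
      (-⟪w, g q⟫ - ⟪θ, fderiv ℝ g q v⟫) / (1 + ‖g q‖ ^ 2) +
        2 * ⟪θ, g q⟫ * ⟪g q, fderiv ℝ g q v⟫ / (1 + ‖g q‖ ^ 2) ^ 2 := by
  have hg' : DifferentiableAt ℝ (fun p : E × F => g p.1) (q, θ) := hg.comp _ differentiableAt_fst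
  have hb : 1 + ‖g q‖ ^ 2 ≠ 0 := by positivity
  have hd : DifferentiableAt ℝ (fun p : E × F => -⟪p.2, g p.1⟫ / (1 + ‖g p.1‖ ^ 2)) (q, θ) :=
    (differentiableAt_snd.inner ℝ hg').fun_neg.fun_mul (((hg'.norm_sq ℝ).const_add 1).inv hb)
  rw [← hd.lineDeriv_eq_fderiv]
  exact (hasLineDerivAt_neg_inner_div_one_add_norm_sq hg θ v w).lineDeriv

theorem ContDiff.differentiable_gradient [CompleteSpace F] {V : F → ℝ} (hV : ContDiff ℝ 2 V) :
    Differentiable ℝ (gradient V) :=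
  ((InnerProductSpace.toDual ℝ F).symm.contDiff.comp
    (hV.fderiv_right (m := 1) (by norm_num))).differentiable one_ne_zero

theorem sub_three_mul_opNorm_div_le (G θ : F) (H : F →L[ℝ] F) :
    (‖G‖ ^ 2 - 3 * ‖H‖ * ‖θ‖ ^ 2) / (1 + ‖G‖ ^ 2) ≤
      (‖G‖ ^ 2 - ⟪θ, H θ⟫) / (1 + ‖G‖ ^ 2) +
        2 * ⟪θ, G⟫ * ⟪G, H θ⟫ / (1 + ‖G‖ ^ 2) ^ 2 := by
  set b := 1 + ‖G‖ ^ 2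
  have hb : 0 < b := by positivity
  have hHθ : ‖H θ‖ ≤ ‖H‖ * ‖θ‖ := H.le_opNorm θ
  have hdiag : ⟪θ, H θ⟫ ≤ ‖H‖ * ‖θ‖ ^ 2 :=
    calc ⟪θ, H θ⟫ ≤ ‖θ‖ * ‖H θ‖ := real_inner_le_norm θ (H θ)
      _ ≤ ‖θ‖ * (‖H‖ * ‖θ‖) := by gcongr
      _ = ‖H‖ * ‖θ‖ ^ 2 := by ring
  have hcross : -(‖H‖ * ‖θ‖ ^ 2 * b) ≤ ⟪θ, G⟫ * ⟪G, H θ⟫ := by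
    rw [neg_le]
    calc -(⟪θ, G⟫ * ⟪G, H θ⟫) ≤ |⟪θ, G⟫| * |⟪G, H θ⟫| := by
          rw [← abs_mul]; exact neg_le_abs _
      _ ≤ (‖θ‖ * ‖G‖) * (‖G‖ * (‖H‖ * ‖θ‖)) := by
          gcongr
          · exact abs_real_inner_le_norm θ G
          · exact (abs_real_inner_le_norm G (H θ)).trans (by gcongr)
      _ = ‖H‖ * ‖θ‖ ^ 2 * ‖G‖ ^ 2 := by ring
      _ ≤ ‖H‖ * ‖θ‖ ^ 2 * b := by gcongr; simp [b]
  have hcross_div : -(2 * (‖H‖ * ‖θ‖ ^ 2)) ≤ 2 * ⟪θ, G⟫ * ⟪G, H θ⟫ / b := by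
    rw [le_div_iff₀ hb]; linarith
  calc (‖G‖ ^ 2 - 3 * ‖H‖ * ‖θ‖ ^ 2) / b
      ≤ (‖G‖ ^ 2 - ⟪θ, H θ⟫ + 2 * ⟪θ, G⟫ * ⟪G, H θ⟫ / b) / b := by gcongr; linarith
    _ = _ := by rw [add_div, div_div, ← sq]

end

/-- Uniform contact-type estimate: if `3‖Hess V(q)‖/(1+|∇V(q)|²) ≤ C` for all `q`, and
`0 < κ ≤ 1/(2C)`, then the perturbed Liouville form `Θ = Λ + κ df` evaluated on the
Hamiltonian vector field `X_H = (θ, −∇V(q))` satisfies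
`Θ(X_H)(q,θ) = |θ|² + κ·X_H(f)(q,θ) ≥ (1/2)|θ|² + κ·|∇V(q)|²/(1+|∇V(q)|²)`. -/
theorem contact_form_lower_bound (n : ℕ) (V : EuclideanSpace ℝ (Fin n) → ℝ)
    (hV : ContDiff ℝ 2 V) (C : ℝ) (hC : 0 < C)
    (hHess : ∀ q, 3 * ‖fderiv ℝ (gradient V) q‖ / (1 + ‖gradient V q‖ ^ 2) ≤ C)
    (κ : ℝ) (hκ0 : 0 < κ) (hκ : κ ≤ 1 / (2 * C))
    (f : EuclideanSpace ℝ (Fin n) × EuclideanSpace ℝ (Fin n) → ℝ)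
    (hf : ∀ p : EuclideanSpace ℝ (Fin n) × EuclideanSpace ℝ (Fin n),
      f p = -⟪p.2, gradient V p.1⟫ / (1 + ‖gradient V p.1‖ ^ 2)) :
    ∀ q θ : EuclideanSpace ℝ (Fin n),
      ‖θ‖ ^ 2 + κ * fderiv ℝ f (q, θ) (θ, -(gradient V q)) ≥
        (1 / 2) * ‖θ‖ ^ 2 + κ * ‖gradient V q‖ ^ 2 / (1 + ‖gradient V q‖ ^ 2) := by
  intro q θ
  set G := gradient V q
  set H := fderiv ℝ (gradient V) q
  have hb : 0 < 1 + ‖G‖ ^ 2 := by positivity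
  have hH : 3 * ‖H‖ ≤ C * (1 + ‖G‖ ^ 2) := (div_le_iff₀ hb).mp (hHess q)
  have hκC : κ * C ≤ 1 / 2 := by rw [le_div_iff₀ (by positivity)] at hκ; linarith
  have hXf : fderiv ℝ f (q, θ) (θ, -G) =
      (‖G‖ ^ 2 - ⟪θ, H θ⟫) / (1 + ‖G‖ ^ 2) + 2 * ⟪θ, G⟫ * ⟪G, H θ⟫ / (1 + ‖G‖ ^ 2) ^ 2 := by
    rw [funext hf, fderiv_neg_inner_div_one_add_norm_sq_apply (hV.differentiable_gradient q),
      inner_neg_left, real_inner_self_eq_norm_sq, neg_neg]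
  have hCθ : 3 * ‖H‖ * ‖θ‖ ^ 2 / (1 + ‖G‖ ^ 2) ≤ C * ‖θ‖ ^ 2 := by
    rw [div_le_iff₀ hb]; nlinarith [sq_nonneg ‖θ‖]
  calc ‖θ‖ ^ 2 + κ * fderiv ℝ f (q, θ) (θ, -G)
      ≥ ‖θ‖ ^ 2 + κ * ((‖G‖ ^ 2 - 3 * ‖H‖ * ‖θ‖ ^ 2) / (1 + ‖G‖ ^ 2)) := by
        rw [hXf]; gcongr; exact sub_three_mul_opNorm_div_le G θ H
    _ ≥ ‖θ‖ ^ 2 + κ * (‖G‖ ^ 2 / (1 + ‖G‖ ^ 2) - C * ‖θ‖ ^ 2) := by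
        rw [sub_div]; gcongr
    _ ≥ (1 / 2) * ‖θ‖ ^ 2 + κ * ‖G‖ ^ 2 / (1 + ‖G‖ ^ 2) := by
        rw [mul_sub, mul_div_assoc]; nlinarith [sq_nonneg ‖θ‖]
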